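/- Let F be a finite field of odd order q and ν ≥ 1. Every ν×ν alternate matrix X over F of rank 2r > 0 is congruent via some matrix T ∈ O₁ (invertible, lower block-triangular with 1×1 upper-left block) to exactly one of the two matrices [0, A_{2r}, 0^{(ν-2r-1)}] (requiring 2r+1 ≤ ν) or [A_{2r}, 0^{(ν-2r)}], i.e., Tᵗ X T equals one of these forms. -/

import Mathlib

open Matrix

-- `sympBlock F ν s r`: block diagonal with a zero block of size `s`, then
-- `r` copies of `[[0,1],[-1,0]]` starting at index `s`, then zeros.
open scoped Classical in
noncomputable def sympBlock (F : Type*) [Field F] (ν s r : ℕ) :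
    Matrix (Fin ν) (Fin ν) F := fun i j =>
  if ∃ k, k < r ∧ (i : ℕ) = s + 2 * k ∧ (j : ℕ) = s + 2 * k + 1 then 1
  else if ∃ k, k < r ∧ (i : ℕ) = s + 2 * k + 1 ∧ (j : ℕ) = s + 2 * k then -1
  else 0

section helpers
variable {F : Type*} [Field F] {n : ℕ}

lemma sympBlock_zero (ν s : ℕ) : sympBlock F ν s 0 = 0 := by
  funext i j; simp [sympBlock]

lemma congrEntry (T A : Matrix (Fin n) (Fin n) F) (i j : Fin n) :
    (Tᵀ * A * T) i j = Tᵀ i ⬝ᵥ (A *ᵥ Tᵀ j) := by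
  rw [Matrix.mul_assoc, Matrix.mul_apply]
  simp only [dotProduct, mulVec, transpose_apply, Matrix.mul_apply]

lemma dot_ite (c : Fin n) (x : F) (u : Fin n → F) :
    (fun k => if k = c then x else 0) ⬝ᵥ u = x * u c := by
  simp [dotProduct, Finset.sum_ite_eq']

lemma mulVec_ite (A : Matrix (Fin n) (Fin n) F) (c : Fin n) (x : F) :
    A *ᵥ (fun k => if k = c then x else 0) = fun i => A i c * x := by
  funext i; simp [mulVec, dotProduct, mul_ite, Finset.sum_ite_eq']

lemma altCongr {A T : Matrix (Fin n) (Fin n) F} (h : Aᵀ = -A) :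
    (Tᵀ * A * T)ᵀ = -(Tᵀ * A * T) := by
  simp only [transpose_mul, transpose_transpose, h, Matrix.mul_neg, Matrix.neg_mul,
    Matrix.mul_assoc]

lemma skew_dot {A : Matrix (Fin n) (Fin n) F} (h : Aᵀ = -A) (u v : Fin n → F) :
    u ⬝ᵥ (A *ᵥ v) = -((A *ᵥ u) ⬝ᵥ v) := by
  have h1 : A *ᵥ u = -(u ᵥ* A) := by rw [← vecMul_transpose, h, Matrix.vecMul_neg]
  rw [dotProduct_mulVec, h1, neg_dotProduct, neg_neg]

end helpers

section symp
variable {F : Type*} [Field F] {n s r : ℕ}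

lemma sympBlock_apply_one {i j : Fin n} (k : ℕ) (hk : k < r)
    (hi : (i : ℕ) = s + 2 * k) (hj : (j : ℕ) = s + 2 * k + 1) :
    sympBlock F n s r i j = 1 := by
  simp only [sympBlock]
  rw [if_pos ⟨k, hk, hi, hj⟩]

lemma sympBlock_apply_neg {i j : Fin n} (k : ℕ) (hk : k < r)
    (hi : (i : ℕ) = s + 2 * k + 1) (hj : (j : ℕ) = s + 2 * k) :
    sympBlock F n s r i j = -1 := by
  simp only [sympBlock]
  rw [if_neg, if_pos ⟨k, hk, hi, hj⟩]
  rintro ⟨k', _, h1, h2⟩; omega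

lemma sympBlock_apply_zero {i j : Fin n}
    (h : ∀ k, k < r → ¬((i : ℕ) = s + 2 * k ∧ (j : ℕ) = s + 2 * k + 1) ∧
      ¬((i : ℕ) = s + 2 * k + 1 ∧ (j : ℕ) = s + 2 * k)) :
    sympBlock F n s r i j = 0 := by
  simp only [sympBlock]
  rw [if_neg, if_neg]
  · rintro ⟨k, hk, h1, h2⟩; exact (h k hk).2 ⟨h1, h2⟩
  · rintro ⟨k, hk, h1, h2⟩; exact (h k hk).1 ⟨h1, h2⟩

lemma sympBlock_row_even {i : Fin n} (k : ℕ) (hk : k < r) (hi : (i : ℕ) = s + 2 * k) :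
    sympBlock F n s r i = fun x : Fin n => if (x : ℕ) = s + 2 * k + 1 then (1:F) else 0 := by
  funext x
  by_cases hx : (x : ℕ) = s + 2 * k + 1
  · rw [sympBlock_apply_one k hk hi hx, if_pos hx]
  · rw [sympBlock_apply_zero, if_neg hx]
    intro t ht; constructor <;> rintro ⟨h1, h2⟩ <;> omega

lemma sympBlock_row_odd {i : Fin n} (k : ℕ) (hk : k < r) (hi : (i : ℕ) = s + 2 * k + 1) :
    sympBlock F n s r i = fun x : Fin n => if (x : ℕ) = s + 2 * k then (-1:F) else 0 := by
  funext x
  by_cases hx : (x : ℕ) = s + 2 * k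
  · rw [sympBlock_apply_neg k hk hi hx, if_pos hx]
  · rw [sympBlock_apply_zero, if_neg hx]
    intro t ht; constructor <;> rintro ⟨h1, h2⟩ <;> omega

lemma sympBlock_row_zero {i : Fin n} (h : ¬(s ≤ (i : ℕ) ∧ (i : ℕ) < s + 2 * r)) :
    sympBlock F n s r i = 0 := by
  funext x
  rw [sympBlock_apply_zero]
  · rfl
  · intro t ht; constructor <;> rintro ⟨h1, h2⟩ <;> omega

end symp

section blocks
variable {F : Type*} [Field F]

lemma sympBlock_cons2 {k r n : ℕ} (ε : (Fin 2 ⊕ Fin k) ≃ Fin n)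
    (h1 : ∀ a : Fin 2, ((ε (Sum.inl a)) : ℕ) = (a : ℕ))
    (h2 : ∀ b : Fin k, ((ε (Sum.inr b)) : ℕ) = 2 + (b : ℕ)) :
    (reindex ε ε (fromBlocks (!![0,1;-1,0] : Matrix (Fin 2) (Fin 2) F) 0 0
      (sympBlock F k 0 r))) = sympBlock F n 0 (r + 1) := by
  funext i j
  rw [reindex_apply, submatrix_apply]
  obtain ⟨x, rfl⟩ : ∃ x, ε x = i := ⟨ε.symm i, by simp⟩
  obtain ⟨y, rfl⟩ : ∃ y, ε y = j := ⟨ε.symm j, by simp⟩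
  rw [Equiv.symm_apply_apply, Equiv.symm_apply_apply]
  cases x with
  | inl a =>
    cases y with
    | inl b =>
      rw [fromBlocks_apply₁₁]
      fin_cases a <;> fin_cases b
      · rw [sympBlock_apply_zero] <;> simp_all <;> omega
      · rw [sympBlock_apply_one 0 (by omega) (by simpa using h1 0) (by simpa using h1 1)]; simp
      · rw [sympBlock_apply_neg 0 (by omega) (by simpa using h1 1) (by simpa using h1 0)]; simp
      · rw [sympBlock_apply_zero] <;> simp_all <;> omega
    | inr b =>
      rw [fromBlocks_apply₁₂]
      have ha := h1 a; have hb := h2 b; have ha2 := a.isLt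
      rw [sympBlock_apply_zero]
      · simp
      · intro t ht; constructor <;> rintro ⟨e1, e2⟩ <;> omega
  | inr a =>
    cases y with
    | inl b =>
      rw [fromBlocks_apply₂₁]
      have ha := h2 a; have hb := h1 b; have hb2 := b.isLt
      rw [sympBlock_apply_zero]
      · simp
      · intro t ht; constructor <;> rintro ⟨e1, e2⟩ <;> omega
    | inr b =>
      rw [fromBlocks_apply₂₂]
      have ha := h2 a; have hb := h2 b
      by_cases hc1 : ∃ t, t < r ∧ (a : ℕ) = 0 + 2 * t ∧ (b : ℕ) = 0 + 2 * t + 1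
      · obtain ⟨t, ht, e1, e2⟩ := hc1
        rw [sympBlock_apply_one t ht e1 e2,
          sympBlock_apply_one (t+1) (by omega) (by omega) (by omega)]
      · by_cases hc2 : ∃ t, t < r ∧ (a : ℕ) = 0 + 2 * t + 1 ∧ (b : ℕ) = 0 + 2 * t
        · obtain ⟨t, ht, e1, e2⟩ := hc2
          rw [sympBlock_apply_neg t ht e1 e2,
            sympBlock_apply_neg (t+1) (by omega) (by omega) (by omega)]
        · rw [sympBlock_apply_zero, sympBlock_apply_zero]
          · intro t ht
            constructor <;> rintro ⟨e1, e2⟩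
            · rcases Nat.eq_zero_or_pos t with rfl | htp
              · omega
              · exact hc1 ⟨t - 1, by omega, by omega, by omega⟩
            · rcases Nat.eq_zero_or_pos t with rfl | htp
              · omega
              · exact hc2 ⟨t - 1, by omega, by omega, by omega⟩
          · intro t ht
            constructor <;> rintro ⟨e1, e2⟩
            · exact hc1 ⟨t, ht, by omega, by omega⟩
            · exact hc2 ⟨t, ht, by omega, by omega⟩

lemma sympBlock_cons1 {m r n : ℕ} (ε : (Fin 1 ⊕ Fin m) ≃ Fin n)
    (h1 : ∀ a : Fin 1, ((ε (Sum.inl a)) : ℕ) = 0)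
    (h2 : ∀ b : Fin m, ((ε (Sum.inr b)) : ℕ) = 1 + (b : ℕ)) :
    (reindex ε ε (fromBlocks (0 : Matrix (Fin 1) (Fin 1) F) 0 0
      (sympBlock F m 0 r))) = sympBlock F n 1 r := by
  funext i j
  rw [reindex_apply, submatrix_apply]
  obtain ⟨x, rfl⟩ : ∃ x, ε x = i := ⟨ε.symm i, by simp⟩
  obtain ⟨y, rfl⟩ : ∃ y, ε y = j := ⟨ε.symm j, by simp⟩
  rw [Equiv.symm_apply_apply, Equiv.symm_apply_apply]
  cases x with
  | inl a =>
    have ha := h1 a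
    cases y with
    | inl b =>
      have hb := h1 b
      rw [fromBlocks_apply₁₁, sympBlock_apply_zero]
      · simp
      · intro t ht; constructor <;> rintro ⟨e1, e2⟩ <;> omega
    | inr b =>
      have hb := h2 b
      rw [fromBlocks_apply₁₂, sympBlock_apply_zero]
      · simp
      · intro t ht; constructor <;> rintro ⟨e1, e2⟩ <;> omega
  | inr a =>
    have ha := h2 a
    cases y with
    | inl b =>
      have hb := h1 b
      rw [fromBlocks_apply₂₁, sympBlock_apply_zero]
      · simp
      · intro t ht; constructor <;> rintro ⟨e1, e2⟩ <;> omega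
    | inr b =>
      have hb := h2 b
      rw [fromBlocks_apply₂₂]
      by_cases hc1 : ∃ t, t < r ∧ (a : ℕ) = 0 + 2 * t ∧ (b : ℕ) = 0 + 2 * t + 1
      · obtain ⟨t, ht, e1, e2⟩ := hc1
        rw [sympBlock_apply_one t ht e1 e2, sympBlock_apply_one t ht (by omega) (by omega)]
      · by_cases hc2 : ∃ t, t < r ∧ (a : ℕ) = 0 + 2 * t + 1 ∧ (b : ℕ) = 0 + 2 * t
        · obtain ⟨t, ht, e1, e2⟩ := hc2
          rw [sympBlock_apply_neg t ht e1 e2, sympBlock_apply_neg t ht (by omega) (by omega)]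
        · rw [sympBlock_apply_zero, sympBlock_apply_zero]
          · intro t ht
            constructor <;> rintro ⟨e1, e2⟩
            · exact hc1 ⟨t, ht, by omega, by omega⟩
            · exact hc2 ⟨t, ht, by omega, by omega⟩
          · intro t ht
            constructor <;> rintro ⟨e1, e2⟩
            · exact hc1 ⟨t, ht, by omega, by omega⟩
            · exact hc2 ⟨t, ht, by omega, by omega⟩

end blocks

section rank
variable {F : Type*} [Field F]

lemma sympBlock_mul_transpose (n s r : ℕ) (h : s + 2 * r ≤ n) :
    sympBlock F n s r * (sympBlock F n s r)ᵀ =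
      diagonal (fun i : Fin n => if s ≤ (i : ℕ) ∧ (i : ℕ) < s + 2 * r then (1 : F) else 0) := by
  classical
  funext i j
  rw [Matrix.mul_apply]
  by_cases hi : s ≤ (i : ℕ) ∧ (i : ℕ) < s + 2 * r
  · obtain ⟨k, hk, hcase⟩ : ∃ k, k < r ∧ ((i : ℕ) = s + 2 * k ∨ (i : ℕ) = s + 2 * k + 1) :=
      ⟨((i : ℕ) - s) / 2, by omega, by omega⟩
    rcases hcase with hi1 | hi1
    · have hy : s + 2 * k + 1 < n := by omega
      have hrow : ∀ x : Fin n, sympBlock F n s r i x * (sympBlock F n s r)ᵀ x j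
          = if x = ⟨s + 2 * k + 1, hy⟩ then sympBlock F n s r j x else 0 := by
        intro x
        rw [transpose_apply]
        by_cases hx : x = ⟨s + 2 * k + 1, hy⟩
        · have hx' : (x : ℕ) = s + 2 * k + 1 := by rw [hx]
          rw [if_pos hx]
          simp [sympBlock_row_even k hk hi1, hx']
        · have hx' : (x : ℕ) ≠ s + 2 * k + 1 := by simpa [Fin.ext_iff] using hx
          rw [if_neg hx]
          simp [sympBlock_row_even k hk hi1, hx']
      rw [Finset.sum_congr rfl (fun x _ => hrow x), Finset.sum_ite_eq' Finset.univ]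
      rw [if_pos (Finset.mem_univ _)]
      by_cases hij : i = j
      · subst hij
        rw [sympBlock_apply_one k hk hi1 rfl, diagonal_apply_eq, if_pos hi]
      · rw [diagonal_apply_ne' _ (fun hh => hij hh.symm), sympBlock_apply_zero]
        intro t ht
        have : (j : ℕ) ≠ (i : ℕ) := fun hh => hij (Fin.ext hh.symm)
        constructor <;> rintro ⟨e1, e2⟩ <;> simp at e2 <;> omega
    · have hy : s + 2 * k < n := by omega
      have hrow : ∀ x : Fin n, sympBlock F n s r i x * (sympBlock F n s r)ᵀ x j
          = if x = ⟨s + 2 * k, hy⟩ then -sympBlock F n s r j x else 0 := by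
        intro x
        rw [transpose_apply]
        by_cases hx : x = ⟨s + 2 * k, hy⟩
        · have hx' : (x : ℕ) = s + 2 * k := by rw [hx]
          rw [if_pos hx]
          simp [sympBlock_row_odd k hk hi1, hx', neg_one_mul]
        · have hx' : (x : ℕ) ≠ s + 2 * k := by simpa [Fin.ext_iff] using hx
          rw [if_neg hx]
          simp [sympBlock_row_odd k hk hi1, hx']
      rw [Finset.sum_congr rfl (fun x _ => hrow x), Finset.sum_ite_eq' Finset.univ]
      rw [if_pos (Finset.mem_univ _)]
      by_cases hij : i = j
      · subst hij
        rw [sympBlock_apply_neg k hk hi1 rfl, diagonal_apply_eq, if_pos hi, neg_neg]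
      · rw [diagonal_apply_ne' _ (fun hh => hij hh.symm), sympBlock_apply_zero, neg_zero]
        intro t ht
        have : (j : ℕ) ≠ (i : ℕ) := fun hh => hij (Fin.ext hh.symm)
        constructor <;> rintro ⟨e1, e2⟩ <;> simp at e2 <;> omega
  · rw [Finset.sum_eq_zero]
    · by_cases hij : i = j
      · subst hij; rw [diagonal_apply_eq, if_neg hi]
      · rw [diagonal_apply_ne _ hij]
    · intro x _
      rw [sympBlock_row_zero hi]
      simp

lemma sympBlock_eq_diag_mul (n s r : ℕ) :
    (diagonal (fun i : Fin n => if s ≤ (i : ℕ) ∧ (i : ℕ) < s + 2 * r then (1 : F) else 0)) *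
      sympBlock F n s r = sympBlock F n s r := by
  classical
  funext i j
  rw [diagonal_mul]
  by_cases hi : s ≤ (i : ℕ) ∧ (i : ℕ) < s + 2 * r
  · rw [if_pos hi, one_mul]
  · rw [if_neg hi, zero_mul]
    have := sympBlock_row_zero (F := F) (n := n) (s := s) (r := r) hi
    exact (congrFun this j).symm

lemma rank_sympBlock (n s r : ℕ) (h : s + 2 * r ≤ n) :
    (sympBlock F n s r).rank = 2 * r := by
  classical
  set d : Fin n → F := fun i => if s ≤ (i : ℕ) ∧ (i : ℕ) < s + 2 * r then (1 : F) else 0 with hd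
  have hrd : (diagonal d).rank = 2 * r := by
    rw [Matrix.rank_diagonal]
    have : ∀ i : Fin n, d i ≠ 0 ↔ (s ≤ (i : ℕ) ∧ (i : ℕ) < s + 2 * r) := by
      intro i
      by_cases hi : s ≤ (i : ℕ) ∧ (i : ℕ) < s + 2 * r <;>
        simp [hd, hi]
    rw [Fintype.card_congr (Equiv.subtypeEquivRight this)]
    have e : {i : Fin n // s ≤ (i : ℕ) ∧ (i : ℕ) < s + 2 * r} ≃ Fin (2 * r) :=
      { toFun := fun x => ⟨(x.1 : ℕ) - s, by have := x.2; omega⟩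
        invFun := fun t => ⟨⟨s + (t : ℕ), by have := t.isLt; omega⟩,
          by simp only [Fin.val_mk]; have := t.isLt; omega⟩
        left_inv := fun x => by
          have := x.2
          ext
          simp only [Fin.val_mk]
          omega
        right_inv := fun t => by
          ext
          simp only [Fin.val_mk]
          omega }
    rw [Fintype.card_congr e, Fintype.card_fin]
  refine le_antisymm ?_ ?_
  · calc (sympBlock F n s r).rank = ((diagonal d) * sympBlock F n s r).rank := by
          rw [sympBlock_eq_diag_mul]
      _ ≤ (diagonal d).rank := Matrix.rank_mul_le_left _ _
      _ = 2 * r := hrd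
  · calc 2 * r = (sympBlock F n s r * (sympBlock F n s r)ᵀ).rank := by
          rw [sympBlock_mul_transpose n s r h, hrd]
      _ ≤ (sympBlock F n s r).rank := Matrix.rank_mul_le_left _ _

end rank

section darboux
variable {F : Type*} [Field F]

lemma nsq_zero_unit {n : ℕ} (N : Matrix (Fin n) (Fin n) F) (h : N * N = 0) :
    IsUnit (1 + N).det := by
  have e : (1 + N) * (1 - N) = 1 - N * N := by noncomm_ring
  rw [h, sub_zero] at e
  exact Matrix.isUnit_det_of_right_inverse e

lemma alt_diag {n : ℕ} (h2 : (2 : F) ≠ 0) {M : Matrix (Fin n) (Fin n) F}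
    (hM : Mᵀ = -M) (a : Fin n) : M a a = 0 := by
  have h := congrFun (congrFun hM a) a
  simp only [transpose_apply, Matrix.neg_apply] at h
  have h' : 2 * M a a = 0 := by linear_combination h
  exact (mul_eq_zero.mp h').resolve_left h2

lemma reindex_mul {n : ℕ} {m : Type*} [Fintype m] [DecidableEq m] (ε : m ≃ Fin n)
    (M N : Matrix m m F) : (reindex ε ε M) * (reindex ε ε N) = reindex ε ε (M * N) := by
  simp only [reindex_apply]
  exact submatrix_mul_equiv M N _ _ _

lemma reindex_transpose {n : ℕ} {m : Type*} (ε : m ≃ Fin n) (M : Matrix m m F) :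
    (reindex ε ε M)ᵀ = reindex ε ε Mᵀ := by
  simp only [reindex_apply, transpose_submatrix]

lemma darboux (h2 : (2 : F) ≠ 0) :
    ∀ n, ∀ A : Matrix (Fin n) (Fin n) F, Aᵀ = -A →
      ∃ r T, IsUnit (Matrix.det T) ∧ Tᵀ * A * T = sympBlock F n 0 r ∧ 2 * r ≤ n := by
  intro n
  induction n using Nat.strong_induction_on with
  | _ n IH =>
  intro A hA
  by_cases h0 : A = 0
  · exact ⟨0, 1, by simp, by simp [h0, sympBlock_zero], by omega⟩
  obtain ⟨i, j, hij⟩ : ∃ i j, A i j ≠ 0 := by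
    by_contra hc; push_neg at hc; exact h0 (by funext i j; exact hc i j)
  have hdg : ∀ a, A a a = 0 := alt_diag h2 hA
  have hne : i ≠ j := fun h => hij (h ▸ hdg i)
  have h2n : 2 ≤ n := by
    have h1 := Fintype.one_lt_card_iff_nontrivial.mpr ⟨i, j, hne⟩
    simp at h1; omega
  obtain ⟨k, rfl⟩ : ∃ k, n = k + 2 := ⟨n - 2, by omega⟩
  clear h2n h0
  have h01 : (0 : Fin (k + 2)) ≠ 1 := by
    simp [Fin.ext_iff]
  -- permutation σ with σ 0 = i, σ 1 = j
  set τ := Equiv.swap (0 : Fin (k + 2)) i with hτ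
  have hτj : τ.symm j ≠ 0 := by
    intro h
    have : j = τ 0 := by rw [← h, Equiv.apply_symm_apply]
    rw [Equiv.swap_apply_left] at this
    exact hne this.symm
  set σ : Equiv.Perm (Fin (k + 2)) := (Equiv.swap 1 (τ.symm j)).trans τ with hσ
  have hσ0 : σ 0 = i := by
    have : Equiv.swap (1 : Fin (k+2)) (τ.symm j) 0 = 0 :=
      Equiv.swap_apply_of_ne_of_ne h01 (Ne.symm hτj)
    rw [hσ, Equiv.trans_apply, this, hτ, Equiv.swap_apply_left]
  have hσ1 : σ 1 = j := by
    simp only [hσ, Equiv.trans_apply, Equiv.swap_apply_left, Equiv.apply_symm_apply]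
  -- permutation matrix
  set P : Matrix (Fin (k + 2)) (Fin (k + 2)) F := (1 : Matrix _ _ F).submatrix id σ with hP
  have hPdet : IsUnit P.det := by
    apply Matrix.isUnit_det_of_right_inverse (B := (1 : Matrix _ _ F).submatrix σ id)
    rw [hP]
    have := submatrix_mul_equiv (1 : Matrix (Fin (k+2)) (Fin (k+2)) F)
      (1 : Matrix (Fin (k+2)) (Fin (k+2)) F) id (σ : Fin (k+2) ≃ Fin (k+2)) id
    simpa using this
  have hPT : Pᵀ = (1 : Matrix _ _ F).submatrix σ id := by
    funext a b
    simp only [hP, transpose_apply, submatrix_apply, id_eq, one_apply]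
    exact if_congr eq_comm rfl rfl
  have hPAP : Pᵀ * A * P = A.submatrix σ σ := by
    rw [hPT, hP]
    have e1 := submatrix_mul_equiv (1 : Matrix (Fin (k+2)) (Fin (k+2)) F) A
      (σ : Fin (k+2) ≃ Fin (k+2)) (Equiv.refl (Fin (k+2))) id
    have e2 := submatrix_mul_equiv (A.submatrix σ id) (1 : Matrix (Fin (k+2)) (Fin (k+2)) F)
      id (Equiv.refl (Fin (k+2))) σ
    simp only [Equiv.coe_refl, submatrix_id_id] at e1 e2
    calc (1 : Matrix _ _ F).submatrix σ id * A * (1 : Matrix _ _ F).submatrix id σ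
        = A.submatrix σ id * (1 : Matrix _ _ F).submatrix id σ := by
          rw [show (1 : Matrix _ _ F).submatrix (σ : _ → _) id * A = A.submatrix σ id from by
            simpa using e1]
      _ = A.submatrix σ σ := by simpa using e2
  -- scaling
  set d : Fin (k + 2) → F := fun x => if x = 1 then (A i j)⁻¹ else 1 with hd
  set D : Matrix (Fin (k + 2)) (Fin (k + 2)) F := diagonal d with hD
  have hDdet : IsUnit D.det := by
    rw [hD, det_diagonal, isUnit_iff_ne_zero]
    apply Finset.prod_ne_zero_iff.mpr
    intro x _
    rw [hd]
    by_cases hx : x = 1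
    · simp [hx, inv_ne_zero hij]
    · simp [hx]
  set C : Matrix (Fin (k + 2)) (Fin (k + 2)) F := (P * D)ᵀ * A * (P * D) with hC
  have hCalt : Cᵀ = -C := altCongr hA
  have hCapply : ∀ a b, C a b = d a * A (σ a) (σ b) * d b := by
    intro a b
    have : C = D * (Pᵀ * A * P) * D := by
      rw [hC, transpose_mul, hD, diagonal_transpose]
      noncomm_ring
    rw [this, hPAP, hD, mul_diagonal, diagonal_mul, submatrix_apply]
  have hC01 : C 0 1 = 1 := by
    rw [hCapply, hσ0, hσ1, hd]
    simp [h01, inv_ne_zero, hij]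
  have hC10 : C 1 0 = -1 := by
    have := congrFun (congrFun hCalt 0) 1
    simp only [transpose_apply, Matrix.neg_apply] at this
    rw [this, hC01]
  have hC00 : C 0 0 = 0 := alt_diag h2 hCalt 0
  have hC11 : C 1 1 = 0 := alt_diag h2 hCalt 1
  -- clearing matrix
  set β : Fin (k + 2) → F := fun b => if 2 ≤ (b : ℕ) then C 1 b else 0 with hβ
  set γ : Fin (k + 2) → F := fun b => if 2 ≤ (b : ℕ) then -(C 0 b) else 0 with hγ
  have hβ0 : β 0 = 0 := by simp [hβ]
  have hβ1 : β 1 = 0 := by simp [hβ]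
  have hγ0 : γ 0 = 0 := by simp [hγ]
  have hγ1 : γ 1 = 0 := by simp [hγ]
  set N : Matrix (Fin (k + 2)) (Fin (k + 2)) F :=
    Matrix.of fun a b => if a = 0 then β b else if a = 1 then γ b else 0 with hN
  have hNN : N * N = 0 := by
    funext a b
    rw [Matrix.mul_apply]
    apply Finset.sum_eq_zero
    intro x _
    by_cases hx0 : x = 0
    · subst hx0
      simp [hN, hβ0, hγ0]
    · by_cases hx1 : x = 1
      · subst hx1
        simp [hN, hβ1, hγ1]
      · have : N x b = 0 := by simp [hN, hx0, hx1]
        rw [this, mul_zero]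
  set T₃ : Matrix (Fin (k + 2)) (Fin (k + 2)) F := 1 + N with hT₃
  have hT₃det : IsUnit T₃.det := nsq_zero_unit N hNN
  set Z : Matrix (Fin (k + 2)) (Fin (k + 2)) F := T₃ᵀ * C * T₃ with hZ
  have hZalt : Zᵀ = -Z := altCongr hCalt
  -- column decomposition of T₃
  have hcol : ∀ b, (fun x => T₃ x b) =
      (fun x => if x = b then (1 : F) else 0) + ((fun x => if x = 0 then β b else 0) +
        (fun x => if x = 1 then γ b else 0)) := by
    intro b
    funext x
    simp only [hT₃, Matrix.add_apply, Matrix.one_apply, hN, Matrix.of_apply, Pi.add_apply]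
    by_cases hx0 : x = 0
    · subst hx0
      simp [h01]
    · by_cases hx1 : x = 1
      · subst hx1
        simp [hx0]
      · simp [hx0, hx1]
  have hZent : ∀ a b, Z a b = C a b + β a * C 0 b + γ a * C 1 b + C a 0 * β b + C a 1 * γ b +
      (β a * γ b - γ a * β b) := by
    intro a b
    rw [hZ, congrEntry]
    have ha := hcol a
    have hb := hcol b
    rw [show T₃ᵀ a = fun x => T₃ x a from rfl, show T₃ᵀ b = fun x => T₃ x b from rfl, ha, hb]
    simp only [Matrix.mulVec_add, dotProduct_add, add_dotProduct,
      mulVec_ite, dot_ite]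
    simp only [hC00, hC11, hC01, hC10]
    ring
  have hZ00 : Z 0 0 = 0 := alt_diag h2 hZalt 0
  have hZ11 : Z 1 1 = 0 := alt_diag h2 hZalt 1
  have hZ01 : Z 0 1 = 1 := by
    rw [hZent, hβ0, hγ0, hβ1, hγ1, hC00, hC01, hC11]
    ring
  have hZ10 : Z 1 0 = -1 := by
    have := congrFun (congrFun hZalt 0) 1
    simp only [transpose_apply, Matrix.neg_apply] at this
    rw [this, hZ01]
  have hZ0b : ∀ b : Fin (k + 2), 2 ≤ (b : ℕ) → Z 0 b = 0 := by
    intro b hb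
    rw [hZent, hβ0, hγ0, hC00, hC01, hβ, hγ]
    simp only [hb, if_pos]
    ring
  have hZ1b : ∀ b : Fin (k + 2), 2 ≤ (b : ℕ) → Z 1 b = 0 := by
    intro b hb
    rw [hZent, hβ1, hγ1, hC10, hC11, hβ, hγ]
    simp only [hb, if_pos]
    ring
  have hZa0 : ∀ a : Fin (k + 2), 2 ≤ (a : ℕ) → Z a 0 = 0 := by
    intro a ha
    have := congrFun (congrFun hZalt a) 0
    simp only [transpose_apply, Matrix.neg_apply] at this
    rw [show Z a 0 = Zᵀ 0 a from rfl, hZalt]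
    simp only [Matrix.neg_apply, hZ0b a ha, neg_zero]
  have hZa1 : ∀ a : Fin (k + 2), 2 ≤ (a : ℕ) → Z a 1 = 0 := by
    intro a ha
    rw [show Z a 1 = Zᵀ 1 a from rfl, hZalt]
    simp only [Matrix.neg_apply, hZ1b a ha, neg_zero]
  -- block decomposition
  set ε : (Fin 2 ⊕ Fin k) ≃ Fin (k + 2) :=
    finSumFinEquiv.trans (finCongr (by omega)) with hε
  have hε1 : ∀ a : Fin 2, ((ε (Sum.inl a)) : ℕ) = (a : ℕ) := by
    intro a; simp [hε]
  have hε2 : ∀ b : Fin k, ((ε (Sum.inr b)) : ℕ) = 2 + (b : ℕ) := by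
    intro b; simp [hε]; omega
  set Z' : Matrix (Fin k) (Fin k) F :=
    Matrix.of (fun a b => Z (ε (Sum.inr a)) (ε (Sum.inr b))) with hZ'
  have hZ'alt : Z'ᵀ = -Z' := by
    funext a b
    simp only [hZ', transpose_apply, Matrix.of_apply, Matrix.neg_apply]
    rw [show Z (ε (Sum.inr b)) (ε (Sum.inr a)) = Zᵀ (ε (Sum.inr a)) (ε (Sum.inr b)) from rfl,
      hZalt, Matrix.neg_apply]
  have e0 : ε (Sum.inl 0) = (0 : Fin (k + 2)) := by
    apply Fin.ext; rw [hε1 0]; simp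
  have e1 : ε (Sum.inl 1) = (1 : Fin (k + 2)) := by
    apply Fin.ext; rw [hε1 1]; simp
  have hA2 : ∀ x y : Fin 2, (!![0,1;-1,0] : Matrix (Fin 2) (Fin 2) F) x y
      = Z (ε (Sum.inl x)) (ε (Sum.inl y)) := by
    intro x y
    have fin2 : ∀ z : Fin 2, z = 0 ∨ z = 1 := by decide
    rcases fin2 x with rfl | rfl <;> rcases fin2 y with rfl | rfl
    · rw [e0, hZ00]; norm_num
    · rw [e0, e1, hZ01]; norm_num
    · rw [e1, e0, hZ10]; norm_num
    · rw [e1, hZ11]; norm_num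
  have hZblocks : Z = reindex ε ε
      (fromBlocks (!![0,1;-1,0] : Matrix (Fin 2) (Fin 2) F) 0 0 Z') := by
    have : reindex ε.symm ε.symm Z =
        fromBlocks (!![0,1;-1,0] : Matrix (Fin 2) (Fin 2) F) 0 0 Z' := by
      funext x y
      rw [reindex_apply, submatrix_apply, Equiv.symm_symm]
      cases x with
      | inl a =>
        cases y with
        | inl b => rw [fromBlocks_apply₁₁, hA2]
        | inr b =>
          rw [fromBlocks_apply₁₂]
          have ha := hε1 a
          have hb := hε2 b
          have ha2 := a.isLt
          interval_cases h : (a : ℕ)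
          · have : ε (Sum.inl a) = (0 : Fin (k+2)) := by
              apply Fin.ext; rw [ha]; simp
            rw [this, hZ0b _ (by omega)]; rfl
          · have : ε (Sum.inl a) = (1 : Fin (k+2)) := by
              apply Fin.ext; rw [ha]; simp
            rw [this, hZ1b _ (by omega)]; rfl
      | inr a =>
        cases y with
        | inl b =>
          rw [fromBlocks_apply₂₁]
          have ha := hε2 a
          have hb := hε1 b
          have hb2 := b.isLt
          interval_cases h : (b : ℕ)
          · have : ε (Sum.inl b) = (0 : Fin (k+2)) := by
              apply Fin.ext; rw [hb]; simp
            rw [this, hZa0 _ (by omega)]; rfl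
          · have : ε (Sum.inl b) = (1 : Fin (k+2)) := by
              apply Fin.ext; rw [hb]; simp
            rw [this, hZa1 _ (by omega)]; rfl
        | inr b => rw [fromBlocks_apply₂₂]; rfl
    rw [← this]
    funext x y
    rw [reindex_apply, reindex_apply, submatrix_apply, submatrix_apply, Equiv.symm_symm]
    simp
  -- induction hypothesis
  obtain ⟨r', S, hSdet, hSZ, hrS⟩ := IH k (by omega) Z' hZ'alt
  set T₄ : Matrix (Fin (k + 2)) (Fin (k + 2)) F :=
    reindex ε ε (fromBlocks 1 0 0 S) with hT₄
  have hT₄det : IsUnit T₄.det := by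
    rw [hT₄, det_reindex_self, det_fromBlocks_zero₂₁, det_one, one_mul]
    exact hSdet
  have hblockmul : (fromBlocks (1 : Matrix (Fin 2) (Fin 2) F) 0 0 S)ᵀ *
      fromBlocks (!![0,1;-1,0] : Matrix (Fin 2) (Fin 2) F) 0 0 Z' * fromBlocks 1 0 0 S =
      fromBlocks (!![0,1;-1,0] : Matrix (Fin 2) (Fin 2) F) 0 0 (Sᵀ * Z' * S) := by
    rw [fromBlocks_transpose, fromBlocks_multiply, fromBlocks_multiply]
    simp [Matrix.mul_assoc]
  have hT₄Z : T₄ᵀ * Z * T₄ = sympBlock F (k + 2) 0 (r' + 1) := by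
    rw [hT₄, hZblocks, reindex_transpose, reindex_mul, reindex_mul, hblockmul, hSZ]
    exact sympBlock_cons2 ε hε1 hε2
  refine ⟨r' + 1, P * D * T₃ * T₄, ?_, ?_, by omega⟩
  · rw [det_mul, det_mul, det_mul]
    exact ((hPdet.mul hDdet).mul hT₃det).mul hT₄det
  · have hkey : (P * D * T₃ * T₄)ᵀ * A * (P * D * T₃ * T₄) = T₄ᵀ * Z * T₄ := by
      rw [hZ, hC]
      simp only [transpose_mul, Matrix.mul_assoc]
    rw [hkey, hT₄Z]

end darboux

section mainaux
variable {F : Type*} [Field F]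

lemma O1_mul {n : ℕ} {P Q : Matrix (Fin (n + 1)) (Fin (n + 1)) F}
    (hP : ∀ j, j ≠ 0 → P 0 j = 0) (hQ : ∀ j, j ≠ 0 → Q 0 j = 0) :
    ∀ j, j ≠ 0 → (P * Q) 0 j = 0 := by
  intro j hj
  rw [Matrix.mul_apply]
  apply Finset.sum_eq_zero
  intro x _
  by_cases hx : x = 0
  · subst hx; rw [hQ j hj, mul_zero]
  · rw [hP x hx, zero_mul]

lemma det_updateCol_one {n : ℕ} (p : Fin (n + 1)) (w : Fin (n + 1) → F) :
    ((1 : Matrix (Fin (n + 1)) (Fin (n + 1)) F).updateCol p w).det = w p := by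
  have h := Matrix.cramer_apply (1 : Matrix (Fin (n + 1)) (Fin (n + 1)) F) w p
  rw [Matrix.cramer_one] at h
  exact h.symm

lemma rank_congr {n : ℕ} (T X : Matrix (Fin n) (Fin n) F) (h : IsUnit T.det) :
    (Tᵀ * X * T).rank = X.rank := by
  rw [Matrix.rank_mul_eq_left_of_isUnit_det _ _ h,
    Matrix.rank_mul_eq_right_of_isUnit_det _ _ (by rwa [Matrix.det_transpose])]

lemma exists_preimage_e0 {n : ℕ} (X : Matrix (Fin (n + 1)) (Fin (n + 1)) F) (hX : Xᵀ = -X)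
    (H : ∀ v, X *ᵥ v = 0 → v 0 = 0) : ∃ w, X *ᵥ w = Pi.single 0 1 := by
  classical
  set φ := X.mulVecLin with hφ
  set f : ((Fin (n + 1)) → F) →ₗ[F] F := LinearMap.proj 0 with hf
  have hker : LinearMap.ker φ ≤ LinearMap.ker f := by
    intro v hv
    simp only [LinearMap.mem_ker] at hv ⊢
    exact H v hv
  set fbar := (LinearMap.ker φ).liftQ f hker with hfbar
  set e := φ.quotKerEquivRange with he
  obtain ⟨g, hg⟩ := LinearMap.exists_extend (fbar ∘ₗ (e.symm : LinearMap.range φ →ₗ[F] _))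
  have hfac : ∀ v, g (φ v) = v 0 := by
    intro v
    have h1 : (φ v : (Fin (n+1)) → F) = (LinearMap.range φ).subtype ⟨φ v, ⟨v, rfl⟩⟩ := rfl
    rw [h1, ← LinearMap.comp_apply, hg, LinearMap.comp_apply]
    have h2 : e.symm ⟨φ v, ⟨v, rfl⟩⟩ = (LinearMap.ker φ).mkQ v := by
      rw [he]
      exact LinearMap.quotKerEquivRange_symm_apply_image φ v ⟨v, rfl⟩
    rw [LinearEquiv.coe_coe, h2]
    simp only [hfbar, Submodule.mkQ_apply, Submodule.liftQ_apply]
    rfl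
  set y : Fin (n + 1) → F := fun i => g (fun j => if i = j then 1 else 0) with hy
  have hkey : ∀ v, (X *ᵥ v) ⬝ᵥ y = v 0 := by
    intro v
    have h3 := LinearMap.pi_apply_eq_sum_univ g (X *ᵥ v)
    have h4 : g (X *ᵥ v) = v 0 := hfac v
    rw [h4] at h3
    rw [dotProduct]
    rw [h3]
    apply Finset.sum_congr rfl
    intro i _
    rw [smul_eq_mul, hy]
  refine ⟨-y, ?_⟩
  funext j
  have h5 := hkey (Pi.single j 1)
  have h6 : (X *ᵥ Pi.single j 1) ⬝ᵥ y = -((X *ᵥ y) j) := by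
    rw [Matrix.mulVec_single_one, dotProduct]; simp only [Matrix.col_apply]
    rw [show (X *ᵥ y) j = ∑ i, X j i * y i from rfl]
    rw [← Finset.sum_neg_distrib]
    apply Finset.sum_congr rfl
    intro i _
    have h7 : X j i = -(X i j) := by
      have := congrFun (congrFun hX j) i
      simp only [transpose_apply, Matrix.neg_apply] at this
      rw [this, neg_neg]
    rw [h7]; ring
  rw [h6] at h5
  rw [Matrix.mulVec_neg]
  simp only [Pi.neg_apply]
  rw [h5]
  rw [Pi.single_apply, Pi.single_apply]
  simp [eq_comm]

end mainaux

theorem stmt_9 (F : Type*) [Field F] [Fintype F] (q : ℕ)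
    (hq : Fintype.card F = q) (hodd : Odd q) (m : ℕ)
    (X : Matrix (Fin (m + 1)) (Fin (m + 1)) F)
    (halt : Xᵀ = -X) (hdiag : ∀ i, X i i = 0)
    (r : ℕ) (hr : 0 < r) (hrank : X.rank = 2 * r) :
    Xor'
      (2 * r + 1 ≤ m + 1 ∧
        ∃ T : Matrix (Fin (m + 1)) (Fin (m + 1)) F,
          IsUnit T.det ∧ (∀ j : Fin (m + 1), j ≠ 0 → T 0 j = 0) ∧
          Tᵀ * X * T = sympBlock F (m + 1) 1 r)
      (∃ T : Matrix (Fin (m + 1)) (Fin (m + 1)) F,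
          IsUnit T.det ∧ (∀ j : Fin (m + 1), j ≠ 0 → T 0 j = 0) ∧
          Tᵀ * X * T = sympBlock F (m + 1) 0 r) := by
  classical
  have h2 : (2 : F) ≠ 0 := by
    intro h
    obtain ⟨l, hl⟩ := hodd
    have hcast : ((q : ℕ) : F) = 0 := by rw [← hq]; exact FiniteField.cast_card_eq_zero F
    rw [hl] at hcast
    push_cast at hcast
    rw [h] at hcast
    simp at hcast
  have hm1 : 1 ≤ m := by
    have hb := Matrix.rank_le_card_width X
    rw [hrank] at hb
    simp only [Fintype.card_fin] at hb
    omega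
  have hval1 : ((1 : Fin (m + 1)) : ℕ) = 1 := by rw [Fin.val_one', Nat.mod_eq_of_lt (by omega)]
  set ε : (Fin 1 ⊕ Fin m) ≃ Fin (m + 1) :=
    finSumFinEquiv.trans (finCongr (by omega)) with hε
  have hε1 : ∀ a : Fin 1, ((ε (Sum.inl a)) : ℕ) = 0 := by
    intro a
    have ha : a = 0 := Subsingleton.elim _ _
    subst ha
    simp [hε]
  have hε2 : ∀ b : Fin m, ((ε (Sum.inr b)) : ℕ) = 1 + (b : ℕ) := by
    intro b; simp [hε]; omega
  have e0' : ε (Sum.inl 0) = (0 : Fin (m + 1)) := by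
    apply Fin.ext; rw [hε1 0]; simp
  by_cases H : ∃ v, X *ᵥ v = 0 ∧ v 0 ≠ 0
  · -- the kernel contains a vector with nonzero first coordinate : form [0, A_2r, 0]
    obtain ⟨v, hv, hv0⟩ := H
    left
    constructor
    · -- existence of T
      set T₁ := (1 : Matrix (Fin (m + 1)) (Fin (m + 1)) F).updateCol 0 v with hT₁
      have hT₁det : IsUnit T₁.det := by
        rw [hT₁, det_updateCol_one]
        exact isUnit_iff_ne_zero.mpr hv0
      have hT₁row : ∀ j, j ≠ 0 → T₁ 0 j = 0 := by
        intro j hj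
        rw [hT₁, Matrix.updateCol_apply, if_neg hj]
        exact Matrix.one_apply_ne (Ne.symm hj)
      have hcol0 : (fun x => T₁ x 0) = v := by
        funext x; rw [hT₁, Matrix.updateCol_apply, if_pos rfl]
      set Y := T₁ᵀ * X * T₁ with hY
      have hYalt : Yᵀ = -Y := altCongr halt
      have hY0b : ∀ b, Y 0 b = 0 := by
        intro b
        rw [hY, congrEntry, show T₁ᵀ 0 = fun x => T₁ x 0 from rfl, hcol0,
          skew_dot halt, hv]
        simp
      have hYa0 : ∀ a, Y a 0 = 0 := by
        intro a
        rw [hY, congrEntry, show T₁ᵀ 0 = fun x => T₁ x 0 from rfl, hcol0, hv]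
        simp
      set Y' : Matrix (Fin m) (Fin m) F :=
        Matrix.of (fun a b => Y (ε (Sum.inr a)) (ε (Sum.inr b))) with hY'
      have hY'alt : Y'ᵀ = -Y' := by
        funext a b
        simp only [hY', transpose_apply, Matrix.of_apply, Matrix.neg_apply]
        rw [show Y (ε (Sum.inr b)) (ε (Sum.inr a)) =
          Yᵀ (ε (Sum.inr a)) (ε (Sum.inr b)) from rfl, hYalt, Matrix.neg_apply]
      have hYblocks : Y = reindex ε ε
          (fromBlocks (0 : Matrix (Fin 1) (Fin 1) F) 0 0 Y') := by
        have hrr : reindex ε.symm ε.symm Y = fromBlocks 0 0 0 Y' := by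
          funext x y
          rw [reindex_apply, submatrix_apply, Equiv.symm_symm]
          cases x with
          | inl a =>
            have ha : a = 0 := Subsingleton.elim _ _
            subst ha
            rw [e0']
            cases y with
            | inl b => rw [fromBlocks_apply₁₁, hY0b]; simp
            | inr b => rw [fromBlocks_apply₁₂, hY0b]; simp
          | inr a =>
            cases y with
            | inl b =>
              have hb : b = 0 := Subsingleton.elim _ _
              subst hb
              rw [fromBlocks_apply₂₁, e0', hYa0]; simp
            | inr b => rw [fromBlocks_apply₂₂]; rfl
        rw [← hrr]
        funext x y
        rw [reindex_apply, reindex_apply, submatrix_apply, submatrix_apply, Equiv.symm_symm]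
        simp
      obtain ⟨r', S, hSdet, hSY, hrS⟩ := darboux h2 m Y' hY'alt
      set T₄ := reindex ε ε (fromBlocks (1 : Matrix (Fin 1) (Fin 1) F) 0 0 S) with hT₄
      have hT₄det : IsUnit T₄.det := by
        rw [hT₄, det_reindex_self, det_fromBlocks_zero₂₁, det_one, one_mul]
        exact hSdet
      have hT₄row : ∀ j, j ≠ 0 → T₄ 0 j = 0 := by
        intro j hj
        rw [hT₄, reindex_apply, submatrix_apply]
        have h0 : ε.symm 0 = Sum.inl 0 := by rw [← e0', Equiv.symm_apply_apply]
        rw [h0]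
        obtain ⟨y, rfl⟩ : ∃ y, ε y = j := ⟨ε.symm j, by simp⟩
        rw [Equiv.symm_apply_apply]
        cases y with
        | inl b =>
          exfalso
          apply hj
          rw [show b = 0 from Subsingleton.elim _ _, e0']
        | inr b => rw [fromBlocks_apply₁₂]; rfl
      have hblockmul : (fromBlocks (1 : Matrix (Fin 1) (Fin 1) F) 0 0 S)ᵀ *
          fromBlocks (0 : Matrix (Fin 1) (Fin 1) F) 0 0 Y' * fromBlocks 1 0 0 S =
          fromBlocks 0 0 0 (Sᵀ * Y' * S) := by
        rw [fromBlocks_transpose, fromBlocks_multiply, fromBlocks_multiply]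
        simp [Matrix.mul_assoc]
      have hT₄Y : T₄ᵀ * Y * T₄ = sympBlock F (m + 1) 1 r' := by
        rw [hT₄, hYblocks, reindex_transpose, reindex_mul, reindex_mul, hblockmul, hSY]
        exact sympBlock_cons1 ε hε1 hε2
      have hTdet : IsUnit (T₁ * T₄).det := by
        rw [det_mul]; exact hT₁det.mul hT₄det
      have hTX : (T₁ * T₄)ᵀ * X * (T₁ * T₄) = sympBlock F (m + 1) 1 r' := by
        have hkey : (T₁ * T₄)ᵀ * X * (T₁ * T₄) = T₄ᵀ * Y * T₄ := by
          rw [hY]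
          simp only [transpose_mul, Matrix.mul_assoc]
        rw [hkey, hT₄Y]
      have hr' : r' = r := by
        have h1 : ((T₁ * T₄)ᵀ * X * (T₁ * T₄)).rank = X.rank := rank_congr _ X hTdet
        rw [hTX, hrank, rank_sympBlock _ _ _ (by omega)] at h1
        omega
      subst hr'
      exact ⟨by omega, T₁ * T₄, hTdet, O1_mul hT₁row hT₄row, hTX⟩
    · -- impossibility of the other form
      rintro ⟨T', hT'det, hT'row, hT'eq⟩
      set x := T'⁻¹ *ᵥ v with hx
      have hT'x : T' *ᵥ x = v := by
        rw [hx, Matrix.mulVec_mulVec, Matrix.mul_nonsing_inv _ hT'det, Matrix.one_mulVec]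
      have hYx : sympBlock F (m + 1) 0 r *ᵥ x = 0 := by
        rw [← hT'eq, ← Matrix.mulVec_mulVec, ← Matrix.mulVec_mulVec, hT'x, hv,
          Matrix.mulVec_zero]
      have hx0 : x 0 ≠ 0 := by
        intro h0
        apply hv0
        rw [← hT'x, show (T' *ᵥ x) 0 = ∑ k, T' 0 k * x k from rfl,
          Finset.sum_eq_single 0 (fun b _ hb => by rw [hT'row b hb, zero_mul])
            (fun hh => absurd (Finset.mem_univ _) hh), h0, mul_zero]
      have hrow1 := congrFun hYx 1
      rw [show (sympBlock F (m + 1) 0 r *ᵥ x) 1 = sympBlock F (m + 1) 0 r 1 ⬝ᵥ x from rfl,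
        sympBlock_row_odd 0 hr (by omega)] at hrow1
      rw [show (fun x' : Fin (m + 1) => if (x' : ℕ) = 0 + 2 * 0 then (-1 : F) else 0) =
        (fun x' : Fin (m + 1) => if x' = 0 then (-1 : F) else 0) from by
          funext x'; congr 1; simp only [Nat.mul_zero, Nat.add_zero, Fin.val_eq_zero_iff], dot_ite] at hrow1
      simp only [Pi.zero_apply] at hrow1
      apply hx0
      have : (-1 : F) * x 0 = 0 := hrow1
      simpa using this
  · -- kernel inside the hyperplane : form [A_2r, 0]
    push_neg at H
    right
    obtain ⟨w, hw⟩ := exists_preimage_e0 X halt H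
    have hw0 : w 0 = 0 := by
      have hq0 : w ⬝ᵥ (X *ᵥ w) = 0 := by
        have ha1 := skew_dot halt w w
        have hcomm : (X *ᵥ w) ⬝ᵥ w = w ⬝ᵥ (X *ᵥ w) := dotProduct_comm _ _
        have ha2 : 2 * (w ⬝ᵥ (X *ᵥ w)) = 0 := by linear_combination ha1 - hcomm
        exact (mul_eq_zero.mp ha2).resolve_left h2
      rw [hw, dotProduct_single, mul_one] at hq0
      exact hq0
    obtain ⟨p, hp⟩ : ∃ p, w p ≠ 0 := by
      by_contra hc
      push_neg at hc
      have hwz : w = 0 := by funext p'; exact hc p'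
      rw [hwz, Matrix.mulVec_zero] at hw
      have hco := congrFun hw 0
      simp at hco
    have hp0 : p ≠ 0 := by
      intro h
      exact hp (by rw [h, hw0])
    obtain ⟨kk, rfl⟩ : ∃ kk, m = kk + 1 := ⟨m - 1, by omega⟩
    have h01 : (0 : Fin (kk + 1 + 1)) ≠ 1 := by
      intro hh
      have := congrArg Fin.val hh
      rw [Fin.val_zero, hval1] at this
      omega
    set τ := Equiv.swap (1 : Fin (kk + 1 + 1)) p with hτ
    have hτ0 : τ 0 = 0 := Equiv.swap_apply_of_ne_of_ne h01 (Ne.symm hp0)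
    have hτ1 : τ 1 = p := Equiv.swap_apply_left _ _
    set M := (1 : Matrix (Fin (kk + 1 + 1)) (Fin (kk + 1 + 1)) F).updateCol p w with hM
    set T₁ := M.submatrix id τ with hT₁
    have hT₁eq : T₁ = M * (1 : Matrix _ _ F).submatrix id τ := by
      funext a b
      rw [hT₁, submatrix_apply, Matrix.mul_apply, id_eq]
      simp [Matrix.one_apply, mul_ite, mul_one, mul_zero, Finset.sum_ite_eq',
        submatrix_apply]
    have hT₁det : IsUnit T₁.det := by
      rw [hT₁eq, det_mul]
      refine (isUnit_iff_ne_zero.mpr ?_).mul ?_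
      · rw [hM, det_updateCol_one]; exact hp
      · apply Matrix.isUnit_det_of_right_inverse (B := (1 : Matrix _ _ F).submatrix τ id)
        have := submatrix_mul_equiv (1 : Matrix (Fin (kk + 1 + 1)) (Fin (kk + 1 + 1)) F)
          (1 : Matrix (Fin (kk + 1 + 1)) (Fin (kk + 1 + 1)) F) id
          (τ : Fin (kk + 1 + 1) ≃ Fin (kk + 1 + 1)) id
        simpa using this
    have hcol0 : (fun x => T₁ x 0) = (fun x => if x = 0 then (1 : F) else 0) := by
      funext x
      rw [hT₁, submatrix_apply, id_eq, hτ0, hM, Matrix.updateCol_apply,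
        if_neg (Ne.symm hp0), Matrix.one_apply]
    have hcol1 : (fun x => T₁ x 1) = w := by
      funext x
      rw [hT₁, submatrix_apply, id_eq, hτ1, hM, Matrix.updateCol_apply, if_pos rfl]
    have hcolb : ∀ b : Fin (kk + 1 + 1), 2 ≤ (b : ℕ) →
        (fun x => T₁ x b) = (fun x => if x = τ b then (1 : F) else 0) ∧ τ b ≠ 0 := by
      intro b hb
      have hb1 : b ≠ 1 := by intro hh; rw [hh, hval1] at hb; omega
      have hb0' : b ≠ 0 := by intro hh; rw [hh] at hb; simp at hb
      have hbp : τ b ≠ p := by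
        intro hh
        exact hb1 (τ.injective (hh.trans hτ1.symm))
      have hbz : τ b ≠ 0 := by
        intro hh
        exact hb0' (τ.injective (hh.trans hτ0.symm))
      refine ⟨?_, hbz⟩
      funext x
      rw [hT₁, submatrix_apply, id_eq, hM, Matrix.updateCol_apply, if_neg hbp,
        Matrix.one_apply]
    have hT₁row : ∀ j, j ≠ 0 → T₁ 0 j = 0 := by
      intro j hj
      rw [hT₁, submatrix_apply, id_eq, hM, Matrix.updateCol_apply]
      by_cases hc : τ j = p
      · rw [if_pos hc]; exact hw0
      · rw [if_neg hc]
        apply Matrix.one_apply_ne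
        intro hh
        exact hj (τ.injective (hh.symm.trans hτ0.symm))
    set Y := T₁ᵀ * X * T₁ with hY
    have hYalt : Yᵀ = -Y := altCongr halt
    have hY01 : Y 0 1 = 1 := by
      rw [hY, congrEntry, show T₁ᵀ 0 = fun x => T₁ x 0 from rfl,
        show T₁ᵀ 1 = fun x => T₁ x 1 from rfl, hcol0, hcol1, hw, dot_ite]
      simp
    have hY1b : ∀ b : Fin (kk + 1 + 1), 2 ≤ (b : ℕ) → Y 1 b = 0 := by
      intro b hb
      obtain ⟨hcb, hbz⟩ := hcolb b hb
      rw [hY, congrEntry, show T₁ᵀ 1 = fun x => T₁ x 1 from rfl,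
        show T₁ᵀ b = fun x => T₁ x b from rfl, hcol1, hcb, skew_dot halt, hw,
        single_dotProduct]
      simp [Ne.symm hbz]
    have hY00 : Y 0 0 = 0 := alt_diag h2 hYalt 0
    have hY11 : Y 1 1 = 0 := alt_diag h2 hYalt 1
    have hY10 : Y 1 0 = -1 := by
      have hyt := congrFun (congrFun hYalt 0) 1
      simp only [transpose_apply, Matrix.neg_apply] at hyt
      rw [hyt, hY01]
    set γ : Fin (kk + 1 + 1) → F := fun b => if 2 ≤ (b : ℕ) then -(Y 0 b) else 0 with hγ
    have hγ0 : γ 0 = 0 := by simp [hγ]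
    have hγ1 : γ 1 = 0 := by simp [hγ, hval1]
    set N : Matrix (Fin (kk + 1 + 1)) (Fin (kk + 1 + 1)) F :=
      Matrix.of (fun a b => if a = 1 then γ b else 0) with hN
    have hNN : N * N = 0 := by
      funext a b
      rw [Matrix.mul_apply]
      apply Finset.sum_eq_zero
      intro x _
      by_cases hx : x = 1
      · subst hx; simp [hN, hγ1]
      · have hnx : N x b = 0 := by simp [hN, hx]
        rw [hnx, mul_zero]
    set T₂ := (1 : Matrix (Fin (kk + 1 + 1)) (Fin (kk + 1 + 1)) F) + N with hT₂
    have hT₂det : IsUnit T₂.det := nsq_zero_unit N hNN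
    have hT₂row : ∀ j, j ≠ 0 → T₂ 0 j = 0 := by
      intro j hj
      rw [hT₂, Matrix.add_apply, show N 0 j = 0 from by simp [hN, h01],
        Matrix.one_apply_ne (Ne.symm hj), add_zero]
    have hcolT₂ : ∀ b, (fun x => T₂ x b) =
        (fun x => if x = b then (1 : F) else 0) + (fun x => if x = 1 then γ b else 0) := by
      intro b
      funext x
      simp only [hT₂, Matrix.add_apply, Matrix.one_apply, hN, Matrix.of_apply, Pi.add_apply]
    set Z := T₂ᵀ * Y * T₂ with hZ
    have hZalt : Zᵀ = -Z := altCongr hYalt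
    have hZent : ∀ a b, Z a b = Y a b + γ a * Y 1 b + Y a 1 * γ b + γ a * γ b * Y 1 1 := by
      intro a b
      rw [hZ, congrEntry, show T₂ᵀ a = fun x => T₂ x a from rfl,
        show T₂ᵀ b = fun x => T₂ x b from rfl, hcolT₂ a, hcolT₂ b]
      simp only [Matrix.mulVec_add, dotProduct_add, add_dotProduct,
        mulVec_ite, dot_ite]
      ring
    have hZ01 : Z 0 1 = 1 := by rw [hZent, hγ0, hγ1, hY01, hY11]; ring
    have hZ00 : Z 0 0 = 0 := alt_diag h2 hZalt 0
    have hZ11 : Z 1 1 = 0 := alt_diag h2 hZalt 1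
    have hZ10 : Z 1 0 = -1 := by
      have hzt := congrFun (congrFun hZalt 0) 1
      simp only [transpose_apply, Matrix.neg_apply] at hzt
      rw [hzt, hZ01]
    have hZ0b : ∀ b : Fin (kk + 1 + 1), 2 ≤ (b : ℕ) → Z 0 b = 0 := by
      intro b hb
      rw [hZent, hγ0, hY11, hY01, hγ]
      simp only [hb, if_pos]
      ring
    have hZ1b : ∀ b : Fin (kk + 1 + 1), 2 ≤ (b : ℕ) → Z 1 b = 0 := by
      intro b hb
      rw [hZent, hγ1, hY11, hY1b b hb]
      ring
    have hZa0 : ∀ a : Fin (kk + 1 + 1), 2 ≤ (a : ℕ) → Z a 0 = 0 := by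
      intro a ha
      rw [show Z a 0 = Zᵀ 0 a from rfl, hZalt]
      simp only [Matrix.neg_apply, hZ0b a ha, neg_zero]
    have hZa1 : ∀ a : Fin (kk + 1 + 1), 2 ≤ (a : ℕ) → Z a 1 = 0 := by
      intro a ha
      rw [show Z a 1 = Zᵀ 1 a from rfl, hZalt]
      simp only [Matrix.neg_apply, hZ1b a ha, neg_zero]
    set ε2 : (Fin 2 ⊕ Fin kk) ≃ Fin (kk + 1 + 1) :=
      finSumFinEquiv.trans (finCongr (by omega)) with hε2'
    have hε21 : ∀ a : Fin 2, ((ε2 (Sum.inl a)) : ℕ) = (a : ℕ) := by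
      intro a; simp [hε2']
    have hε22 : ∀ b : Fin kk, ((ε2 (Sum.inr b)) : ℕ) = 2 + (b : ℕ) := by
      intro b; simp [hε2']; omega
    have e20 : ε2 (Sum.inl 0) = (0 : Fin (kk + 1 + 1)) := by
      apply Fin.ext; rw [hε21 0]; simp
    have e21 : ε2 (Sum.inl 1) = (1 : Fin (kk + 1 + 1)) := by
      apply Fin.ext; rw [hε21 1, hval1]; simp
    set Z' : Matrix (Fin kk) (Fin kk) F :=
      Matrix.of (fun a b => Z (ε2 (Sum.inr a)) (ε2 (Sum.inr b))) with hZ'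
    have hZ'alt : Z'ᵀ = -Z' := by
      funext a b
      simp only [hZ', transpose_apply, Matrix.of_apply, Matrix.neg_apply]
      rw [show Z (ε2 (Sum.inr b)) (ε2 (Sum.inr a)) =
        Zᵀ (ε2 (Sum.inr a)) (ε2 (Sum.inr b)) from rfl, hZalt, Matrix.neg_apply]
    have hA2 : ∀ x y : Fin 2, (!![0,1;-1,0] : Matrix (Fin 2) (Fin 2) F) x y
        = Z (ε2 (Sum.inl x)) (ε2 (Sum.inl y)) := by
      intro x y
      have fin2 : ∀ z : Fin 2, z = 0 ∨ z = 1 := by decide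
      rcases fin2 x with rfl | rfl <;> rcases fin2 y with rfl | rfl
      · rw [e20, hZ00]; norm_num
      · rw [e20, e21, hZ01]; norm_num
      · rw [e21, e20, hZ10]; norm_num
      · rw [e21, hZ11]; norm_num
    have hZblocks : Z = reindex ε2 ε2
        (fromBlocks (!![0,1;-1,0] : Matrix (Fin 2) (Fin 2) F) 0 0 Z') := by
      have hrr : reindex ε2.symm ε2.symm Z =
          fromBlocks (!![0,1;-1,0] : Matrix (Fin 2) (Fin 2) F) 0 0 Z' := by
        funext x y
        rw [reindex_apply, submatrix_apply, Equiv.symm_symm]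
        cases x with
        | inl a =>
          cases y with
          | inl b => rw [fromBlocks_apply₁₁, hA2]
          | inr b =>
            rw [fromBlocks_apply₁₂]
            have ha := hε21 a
            have hb := hε22 b
            have ha2 := a.isLt
            interval_cases h : (a : ℕ)
            · have he : ε2 (Sum.inl a) = (0 : Fin (kk + 1 + 1)) := by
                apply Fin.ext; rw [ha]; simp
              rw [he, hZ0b _ (by omega)]; rfl
            · have he : ε2 (Sum.inl a) = (1 : Fin (kk + 1 + 1)) := by
                apply Fin.ext; rw [ha, hval1]
              rw [he, hZ1b _ (by omega)]; rfl
        | inr a =>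
          cases y with
          | inl b =>
            rw [fromBlocks_apply₂₁]
            have ha := hε22 a
            have hb := hε21 b
            have hb2 := b.isLt
            interval_cases h : (b : ℕ)
            · have he : ε2 (Sum.inl b) = (0 : Fin (kk + 1 + 1)) := by
                apply Fin.ext; rw [hb]; simp
              rw [he, hZa0 _ (by omega)]; rfl
            · have he : ε2 (Sum.inl b) = (1 : Fin (kk + 1 + 1)) := by
                apply Fin.ext; rw [hb, hval1]
              rw [he, hZa1 _ (by omega)]; rfl
          | inr b => rw [fromBlocks_apply₂₂]; rfl
      rw [← hrr]
      funext x y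
      rw [reindex_apply, reindex_apply, submatrix_apply, submatrix_apply, Equiv.symm_symm]
      simp
    obtain ⟨r', S, hSdet, hSZ, hrS⟩ := darboux h2 kk Z' hZ'alt
    set T₄ := reindex ε2 ε2 (fromBlocks (1 : Matrix (Fin 2) (Fin 2) F) 0 0 S) with hT₄
    have hT₄det : IsUnit T₄.det := by
      rw [hT₄, det_reindex_self, det_fromBlocks_zero₂₁, det_one, one_mul]
      exact hSdet
    have hT₄row : ∀ j, j ≠ 0 → T₄ 0 j = 0 := by
      intro j hj
      rw [hT₄, reindex_apply, submatrix_apply]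
      have h0 : ε2.symm 0 = Sum.inl 0 := by rw [← e20, Equiv.symm_apply_apply]
      rw [h0]
      obtain ⟨y, rfl⟩ : ∃ y, ε2 y = j := ⟨ε2.symm j, by simp⟩
      rw [Equiv.symm_apply_apply]
      cases y with
      | inl b =>
        rw [fromBlocks_apply₁₁]
        have hbz : b ≠ 0 := by
          intro hh
          exact hj (by rw [hh, e20])
        exact Matrix.one_apply_ne (Ne.symm hbz)
      | inr b => rw [fromBlocks_apply₁₂]; rfl
    have hblockmul : (fromBlocks (1 : Matrix (Fin 2) (Fin 2) F) 0 0 S)ᵀ *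
        fromBlocks (!![0,1;-1,0] : Matrix (Fin 2) (Fin 2) F) 0 0 Z' * fromBlocks 1 0 0 S =
        fromBlocks (!![0,1;-1,0] : Matrix (Fin 2) (Fin 2) F) 0 0 (Sᵀ * Z' * S) := by
      rw [fromBlocks_transpose, fromBlocks_multiply, fromBlocks_multiply]
      simp [Matrix.mul_assoc]
    have hT₄Z : T₄ᵀ * Z * T₄ = sympBlock F (kk + 1 + 1) 0 (r' + 1) := by
      rw [hT₄, hZblocks, reindex_transpose, reindex_mul, reindex_mul, hblockmul, hSZ]
      exact sympBlock_cons2 ε2 hε21 hε22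
    have hTdet : IsUnit (T₁ * T₂ * T₄).det := by
      rw [det_mul, det_mul]; exact (hT₁det.mul hT₂det).mul hT₄det
    have hTX : (T₁ * T₂ * T₄)ᵀ * X * (T₁ * T₂ * T₄) = sympBlock F (kk + 1 + 1) 0 (r' + 1) := by
      have hkey : (T₁ * T₂ * T₄)ᵀ * X * (T₁ * T₂ * T₄) = T₄ᵀ * Z * T₄ := by
        rw [hZ, hY]
        simp only [transpose_mul, Matrix.mul_assoc]
      rw [hkey, hT₄Z]
    have hr' : r' + 1 = r := by
      have h1 : ((T₁ * T₂ * T₄)ᵀ * X * (T₁ * T₂ * T₄)).rank = X.rank := rank_congr _ X hTdet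
      rw [hTX, hrank, rank_sympBlock _ _ _ (by omega)] at h1
      omega
    rw [hr'] at hTX
    refine ⟨⟨T₁ * T₂ * T₄, hTdet, O1_mul (O1_mul hT₁row hT₂row) hT₄row, hTX⟩, ?_⟩
    -- impossibility of the other form
    rintro ⟨-, T', hT'det, hT'row, hT'eq⟩
    have hz : sympBlock F (kk + 1 + 1) 1 r *ᵥ Pi.single 0 1 = 0 := by
      funext i
      simp only [Matrix.mulVec_single_one, Matrix.col_apply, mul_one, Pi.zero_apply]
      rw [sympBlock_apply_zero]
      intro t ht
      constructor <;> rintro ⟨e1, e2⟩ <;> rw [Fin.val_zero] at e2 <;> omega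
    have h1 : (T'ᵀ * X * T') *ᵥ Pi.single 0 1 = 0 := by rw [hT'eq]; exact hz
    rw [← Matrix.mulVec_mulVec, ← Matrix.mulVec_mulVec] at h1
    have hT's : T' *ᵥ Pi.single 0 1 = (fun i => T' i 0) := by
      funext i
      rw [Matrix.mulVec_single]
      simp
    rw [hT's] at h1
    have h3 : (T'ᵀ)⁻¹ *ᵥ (T'ᵀ *ᵥ (X *ᵥ (fun i => T' i 0))) = 0 := by
      rw [h1, Matrix.mulVec_zero]
    rw [Matrix.mulVec_mulVec, Matrix.nonsing_inv_mul _ (by rwa [Matrix.det_transpose]),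
      Matrix.one_mulVec] at h3
    have hv'0 : (fun i => T' i 0) 0 = 0 := H (fun i => T' i 0) h3
    have hdet0 : T'.det = 0 := by
      apply Matrix.det_eq_zero_of_row_eq_zero 0
      intro j
      by_cases hj : j = 0
      · rw [hj]; exact hv'0
      · exact hT'row j hj
    exact hT'det.ne_zero hdet0
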